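/- arXiv:1002.2501 — 2 statements merged into one kernel-verified Lean document; each statement's English description precedes it below -/
import Mathlib

section
/- Let N ≥ 1 and let ε, σ > 0 satisfy εσ < 1. Let 𝒦₁ ⊆ [0,∞) × ℝ^N be a closed tube, let L ⊆ ℝ × ℝ^N be nonempty and closed, and let s₁ ≥ 0 be such that: (a) d^σ_L(τ, z) ≥ ε e^{−τ} for every (τ, z) ∈ 𝒦₁ with τ ≤ s₁; (b) there exists y ∈ 𝒦₁(s₁) with d^σ_L(s₁, y) = ε e^{−s₁}. Define 𝒦 := {(s, y) ∈ [0,∞) × ℝ^N : there exists (τ, z) ∈ 𝒦₁ with τ ≤ s₁ and ‖(s, y) − (τ, z)‖_σ ≤ ε(e^{−τ} − e^{−s₁})}. Then 𝒦 is closed, 𝒦(s₁) = 𝒦₁(s₁), and e(𝒦, L) = ε e^{−s₁}; moreover there exist y₁ ∈ 𝒦(s₁) and (s₂, y₂) ∈ L with ‖(s₁, y₁) − (s₂, y₂)‖_σ = ε e^{−s₁}. -/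
open Metric Set

/-- The norm `‖(t,x)‖_σ = sqrt(t²/σ² + ‖x‖²)` on `ℝ × ℝ^N`. -/
noncomputable def snormS {N : ℕ} (σ : ℝ) (p : ℝ × EuclideanSpace ℝ (Fin N)) : ℝ :=
  Real.sqrt (p.1 ^ 2 / σ ^ 2 + ‖p.2‖ ^ 2)

/-- The distance function `d^σ_E(p) = inf {‖q - p‖_σ : q ∈ E}`. -/
noncomputable def distS {N : ℕ} (σ : ℝ) (E : Set (ℝ × EuclideanSpace ℝ (Fin N)))
    (p : ℝ × EuclideanSpace ℝ (Fin N)) : ℝ :=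
  sInf {r | ∃ q ∈ E, r = snormS σ (q - p)}

/-- The minimal distance `e(A,B) = inf {‖p - q‖_σ : p ∈ A, q ∈ B}`. -/
noncomputable def eS {N : ℕ} (σ : ℝ) (A B : Set (ℝ × EuclideanSpace ℝ (Fin N))) : ℝ :=
  sInf {r | ∃ p ∈ A, ∃ q ∈ B, r = snormS σ (p - q)}

/-! The radius `ε (e^{-τ} - e^{-s₁})` of the ball around `(τ, z) ∈ 𝒦₁` is exactly the slack in
(a), so by the triangle inequality every point of `𝒦` keeps distance `≥ ε e^{-s₁}` from `L`, and the
point of (b) attains it. Since `e^{-τ} - e^{-s₁} ≤ s₁ - τ` and `εσ < 1`, such a ball reaches time `s₁`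
only when `τ = s₁`, where its radius is `0`; hence the slices at `s₁` agree. Finally `𝒦` is the
projection of a closed subset of `(𝒦₁ ∩ {τ ≤ s₁}) × (ℝ × ℝᴺ)` whose first factor is compact, so it is
closed. -/

open Filter Real

theorem IsClosed.image_snd_of_isCompact_of_subset {X Y : Type*} [TopologicalSpace X]
    [TopologicalSpace Y] {C : Set X} {D : Set (X × Y)} (hC : IsCompact C) (hD : IsClosed D)
    (hDC : D ⊆ C ×ˢ univ) : IsClosed (Prod.snd '' D) := by
  have := isCompact_iff_compactSpace.mp hC
  have hsnd : Prod.snd '' D = Prod.snd '' ((Prod.map Subtype.val id : C × Y → X × Y) ⁻¹' D) := by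
    ext y
    constructor
    · rintro ⟨⟨x, y⟩, hxy, rfl⟩
      exact ⟨(⟨x, (hDC hxy).1⟩, y), hxy, rfl⟩
    · rintro ⟨⟨x, y⟩, hxy, rfl⟩
      exact ⟨_, hxy, rfl⟩
  rw [hsnd]
  exact isClosedMap_snd_of_compactSpace _
    (hD.preimage (continuous_subtype_val.prodMap continuous_id))

section snormS

variable {N : ℕ} {σ : ℝ}

noncomputable def rescaleTime (σ : ℝ) :
    (ℝ × EuclideanSpace ℝ (Fin N)) →L[ℝ] WithLp 2 (ℝ × EuclideanSpace ℝ (Fin N)) :=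
  (WithLp.prodContinuousLinearEquiv 2 ℝ ℝ _).symm.toContinuousLinearMap ∘L
    ((σ⁻¹ • ContinuousLinearMap.fst ℝ ℝ _).prod (ContinuousLinearMap.snd ℝ ℝ _))

theorem snormS_eq_norm_rescaleTime (σ : ℝ) (v : ℝ × EuclideanSpace ℝ (Fin N)) :
    snormS σ v = ‖rescaleTime σ v‖ := by
  simp [rescaleTime, WithLp.prod_norm_eq_of_L2, snormS, div_eq_inv_mul, mul_pow]

theorem continuous_snormS (σ : ℝ) : Continuous (snormS (N := N) σ) := by
  simpa only [← snormS_eq_norm_rescaleTime] using (rescaleTime σ).continuous.norm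

theorem snormS_sub_comm (σ : ℝ) (u v : ℝ × EuclideanSpace ℝ (Fin N)) :
    snormS σ (u - v) = snormS σ (v - u) := by
  simp only [snormS_eq_norm_rescaleTime, map_sub, norm_sub_rev]

theorem snormS_add_le (σ : ℝ) (u v : ℝ × EuclideanSpace ℝ (Fin N)) :
    snormS σ (u + v) ≤ snormS σ u + snormS σ v := by
  simpa only [snormS_eq_norm_rescaleTime, map_add] using norm_add_le _ _

theorem abs_fst_le_mul_snormS (hσ : 0 < σ) (v : ℝ × EuclideanSpace ℝ (Fin N)) :
    |v.1| ≤ σ * snormS σ v := by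
  have : |v.1 / σ| ≤ snormS σ v := Real.abs_le_sqrt (by rw [div_pow]; nlinarith [sq_nonneg ‖v.2‖])
  rwa [abs_div, abs_of_pos hσ, div_le_iff₀' hσ] at this

theorem norm_snd_le_snormS (σ : ℝ) (v : ℝ × EuclideanSpace ℝ (Fin N)) : ‖v.2‖ ≤ snormS σ v := by
  simpa only [abs_norm, snormS] using Real.abs_le_sqrt (x := ‖v.2‖)
    (le_add_of_nonneg_left (div_nonneg (sq_nonneg v.1) (sq_nonneg σ)))

theorem norm_le_max_mul_snormS (hσ : 0 < σ) (v : ℝ × EuclideanSpace ℝ (Fin N)) :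
    ‖v‖ ≤ max σ 1 * snormS σ v := by
  have h0 : 0 ≤ snormS σ v := Real.sqrt_nonneg _
  refine norm_prod_le_iff.mpr ⟨?_, ?_⟩
  · rw [Real.norm_eq_abs]
    exact (abs_fst_le_mul_snormS hσ v).trans (by gcongr; exact le_max_left _ _)
  · exact (norm_snd_le_snormS σ v).trans (le_mul_of_one_le_left h0 (le_max_right _ _))

theorem tendsto_snormS_sub_cocompact_atTop (hσ : 0 < σ) (p : ℝ × EuclideanSpace ℝ (Fin N)) :
    Tendsto (fun q => snormS σ (q - p)) (cocompact _) atTop := by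
  have hlow : ∀ q, (‖q‖ - ‖p‖) / max σ 1 ≤ snormS σ (q - p) := fun q => by
    rw [div_le_iff₀' (by positivity)]
    exact (norm_sub_norm_le q p).trans (norm_le_max_mul_snormS hσ _)
  refine tendsto_atTop_mono hlow (Tendsto.atTop_div_const (by positivity) ?_)
  exact tendsto_atTop_add_const_right _ _ tendsto_norm_cocompact_atTop

theorem distS_le_snormS (σ : ℝ) {E : Set (ℝ × EuclideanSpace ℝ (Fin N))}
    {q : ℝ × EuclideanSpace ℝ (Fin N)} (hq : q ∈ E) (p : ℝ × EuclideanSpace ℝ (Fin N)) :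
    distS σ E p ≤ snormS σ (q - p) :=
  csInf_le ⟨0, by rintro _ ⟨_, _, rfl⟩; exact Real.sqrt_nonneg _⟩ ⟨q, hq, rfl⟩

theorem exists_snormS_sub_eq_distS (hσ : 0 < σ) {L : Set (ℝ × EuclideanSpace ℝ (Fin N))}
    (hL : IsClosed L) (hLne : L.Nonempty) (p : ℝ × EuclideanSpace ℝ (Fin N)) :
    ∃ q ∈ L, snormS σ (q - p) = distS σ L p := by
  obtain ⟨q₀, hq₀⟩ := hLne
  have hcont : Continuous fun q => snormS σ (q - p) :=
    (continuous_snormS σ).comp (continuous_sub_right p)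
  obtain ⟨q, hqL, hmin⟩ := hcont.continuousOn.exists_isMinOn' hL hq₀
    (((tendsto_snormS_sub_cocompact_atTop hσ p).eventually_ge_atTop _).filter_mono inf_le_left)
  refine ⟨q, hqL, Eq.symm <| IsLeast.csInf_eq ⟨⟨q, hqL, rfl⟩, ?_⟩⟩
  rintro _ ⟨q', hq', rfl⟩
  exact hmin hq'

end snormS

theorem exp_neg_sub_exp_neg_le_sub {a b : ℝ} (ha : 0 ≤ a) (hab : a ≤ b) :
    exp (-a) - exp (-b) ≤ b - a := by
  calc exp (-a) - exp (-b) = exp (-a) * (1 - exp (-(b - a))) := by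
        rw [mul_sub, mul_one, ← exp_add]; ring_nf
    _ ≤ 1 * (b - a) :=
        mul_le_mul (exp_le_one_iff.mpr (by linarith)) (by linarith [one_sub_le_exp_neg (b - a)])
          (sub_nonneg.mpr (exp_le_one_iff.mpr (by linarith))) zero_le_one
    _ = b - a := one_mul _

section enlargedTube

variable {N : ℕ} {σ ε s₁ : ℝ} {K₁ : Set (ℝ × EuclideanSpace ℝ (Fin N))}

def enlargedTube (σ ε : ℝ) (K₁ : Set (ℝ × EuclideanSpace ℝ (Fin N))) (s₁ : ℝ) :
    Set (ℝ × EuclideanSpace ℝ (Fin N)) :=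
  {p | 0 ≤ p.1 ∧ ∃ q ∈ K₁, q.1 ≤ s₁ ∧ snormS σ (p - q) ≤ ε * (exp (-q.1) - exp (-s₁))}

theorem isClosed_enlargedTube (hK₁ : IsCompact (K₁ ∩ {p | p.1 ≤ s₁})) :
    IsClosed (enlargedTube σ ε K₁ s₁) := by
  set D := {qp : (ℝ × EuclideanSpace ℝ (Fin N)) × (ℝ × EuclideanSpace ℝ (Fin N)) |
    qp.1 ∈ K₁ ∩ {p | p.1 ≤ s₁} ∧ snormS σ (qp.2 - qp.1) ≤ ε * (exp (-qp.1.1) - exp (-s₁))}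
  have hD : IsClosed D := (hK₁.isClosed.preimage continuous_fst).inter <|
    isClosed_le ((continuous_snormS σ).comp (continuous_snd.sub continuous_fst)) (by fun_prop)
  have hproj : enlargedTube σ ε K₁ s₁ = {p | 0 ≤ p.1} ∩ Prod.snd '' D := by
    ext p
    constructor
    · rintro ⟨hp, q, hqK₁, hqs₁, hpq⟩
      exact ⟨hp, (q, p), ⟨⟨hqK₁, hqs₁⟩, hpq⟩, rfl⟩
    · rintro ⟨hp, ⟨q, p⟩, ⟨⟨hqK₁, hqs₁⟩, hpq⟩, rfl⟩
      exact ⟨hp, q, hqK₁, hqs₁, hpq⟩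
  rw [hproj]
  exact (isClosed_le continuous_const continuous_fst).inter
    (hD.image_snd_of_isCompact_of_subset hK₁ fun qp hqp => ⟨hqp.1, trivial⟩)

theorem mk_mem_enlargedTube (hs₁ : 0 ≤ s₁) {x : EuclideanSpace ℝ (Fin N)}
    (hx : (s₁, x) ∈ K₁) : (s₁, x) ∈ enlargedTube σ ε K₁ s₁ :=
  ⟨hs₁, (s₁, x), hx, le_rfl, by simp [snormS]⟩

theorem mk_mem_of_mk_mem_enlargedTube (hσ : 0 < σ) (hε : 0 < ε) (hεσ : ε * σ < 1)
    (hK₁ : ∀ p ∈ K₁, 0 ≤ p.1) {x : EuclideanSpace ℝ (Fin N)}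
    (hx : (s₁, x) ∈ enlargedTube σ ε K₁ s₁) : (s₁, x) ∈ K₁ := by
  obtain ⟨-, q, hqK₁, hqs₁, hxq⟩ := hx
  have hexp : exp (-q.1) - exp (-s₁) ≤ s₁ - q.1 := exp_neg_sub_exp_neg_le_sub (hK₁ q hqK₁) hqs₁
  have htime : s₁ - q.1 ≤ σ * snormS σ ((s₁, x) - q) := by
    simpa [abs_of_nonneg (sub_nonneg.2 hqs₁)] using abs_fst_le_mul_snormS hσ ((s₁, x) - q)
  have hshrink : s₁ - q.1 ≤ ε * σ * (s₁ - q.1) := calc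
    s₁ - q.1 ≤ σ * snormS σ ((s₁, x) - q) := htime
    _ ≤ σ * (ε * (exp (-q.1) - exp (-s₁))) := by gcongr
    _ ≤ σ * (ε * (s₁ - q.1)) := by gcongr
    _ = ε * σ * (s₁ - q.1) := by ring
  have hq₁ : q.1 = s₁ := by nlinarith
  rw [hq₁, sub_self, mul_zero] at hxq
  have hq₂ : x = q.2 := by
    simpa [sub_eq_zero] using (norm_snd_le_snormS σ ((s₁, x) - q)).trans hxq
  rwa [hq₂, ← hq₁]

theorem le_snormS_of_mem_enlargedTube {L : Set (ℝ × EuclideanSpace ℝ (Fin N))}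
    (hK₁L : ∀ p ∈ K₁, p.1 ≤ s₁ → ε * exp (-p.1) ≤ distS σ L p)
    {p q : ℝ × EuclideanSpace ℝ (Fin N)} (hp : p ∈ enlargedTube σ ε K₁ s₁) (hq : q ∈ L) :
    ε * exp (-s₁) ≤ snormS σ (p - q) := by
  obtain ⟨-, r, hrK₁, hrs₁, hpr⟩ := hp
  have htri := calc
    ε * exp (-r.1) ≤ snormS σ (q - r) := (hK₁L r hrK₁ hrs₁).trans (distS_le_snormS σ hq r)
    _ = snormS σ ((q - p) + (p - r)) := by rw [sub_add_sub_cancel]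
    _ ≤ snormS σ (q - p) + snormS σ (p - r) := snormS_add_le σ _ _
  rw [snormS_sub_comm σ q p] at htri
  linarith

end enlargedTube

theorem stmt11_general (N : ℕ) (ε σ : ℝ) (hε : 0 < ε) (hσ : 0 < σ) (hεσ : ε * σ < 1)
    (K₁ : Set (ℝ × EuclideanSpace ℝ (Fin N)))
    (hK₁sub : ∀ p ∈ K₁, 0 ≤ p.1)
    (hK₁tube : ∀ t : ℝ, IsCompact (K₁ ∩ {p | p.1 ≤ t}))
    (L : Set (ℝ × EuclideanSpace ℝ (Fin N))) (hLne : L.Nonempty) (hLcl : IsClosed L)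
    (s₁ : ℝ) (hs₁ : 0 ≤ s₁)
    (ha : ∀ p ∈ K₁, p.1 ≤ s₁ → ε * Real.exp (-p.1) ≤ distS σ L p)
    (hb : ∃ y, (s₁, y) ∈ K₁ ∧ distS σ L (s₁, y) = ε * Real.exp (-s₁))
    (K : Set (ℝ × EuclideanSpace ℝ (Fin N)))
    (hK : K = {p | 0 ≤ p.1 ∧ ∃ q ∈ K₁, q.1 ≤ s₁ ∧
        snormS σ (p - q) ≤ ε * (Real.exp (-q.1) - Real.exp (-s₁))}) :
    IsClosed K ∧
    {x | (s₁, x) ∈ K} = {x | (s₁, x) ∈ K₁} ∧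
    eS σ K L = ε * Real.exp (-s₁) ∧
    ∃ y₁, (s₁, y₁) ∈ K ∧ ∃ q ∈ L, snormS σ ((s₁, y₁) - q) = ε * Real.exp (-s₁) := by
  change K = enlargedTube σ ε K₁ s₁ at hK
  subst hK
  obtain ⟨y, hyK₁, hyL⟩ := hb
  obtain ⟨q, hqL, hyq⟩ := exists_snormS_sub_eq_distS hσ hLcl hLne (s₁, y)
  have hyK := mk_mem_enlargedTube (σ := σ) (ε := ε) hs₁ hyK₁
  have hattained : snormS σ ((s₁, y) - q) = ε * exp (-s₁) := by
    rw [snormS_sub_comm, hyq, hyL]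
  refine ⟨isClosed_enlargedTube (hK₁tube s₁), ?_, ?_, y, hyK, q, hqL, hattained⟩
  · ext x
    exact ⟨mk_mem_of_mk_mem_enlargedTube hσ hε hεσ hK₁sub, mk_mem_enlargedTube hs₁⟩
  · refine IsLeast.csInf_eq ⟨⟨_, hyK, q, hqL, hattained.symm⟩, ?_⟩
    rintro _ ⟨p, hp, q', hq', rfl⟩
    exact le_snormS_of_mem_enlargedTube ha hp hq'

theorem stmt11 (N : ℕ) (hN : 1 ≤ N) (ε σ : ℝ) (hε : 0 < ε) (hσ : 0 < σ) (hεσ : ε * σ < 1)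
    (K₁ : Set (ℝ × EuclideanSpace ℝ (Fin N)))
    (hK₁sub : ∀ p ∈ K₁, 0 ≤ p.1) (hK₁cl : IsClosed K₁)
    (hK₁tube : ∀ t : ℝ, IsCompact (K₁ ∩ {p | p.1 ≤ t}))
    (L : Set (ℝ × EuclideanSpace ℝ (Fin N))) (hLne : L.Nonempty) (hLcl : IsClosed L)
    (s₁ : ℝ) (hs₁ : 0 ≤ s₁)
    (ha : ∀ p ∈ K₁, p.1 ≤ s₁ → ε * Real.exp (-p.1) ≤ distS σ L p)
    (hb : ∃ y, (s₁, y) ∈ K₁ ∧ distS σ L (s₁, y) = ε * Real.exp (-s₁))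
    (K : Set (ℝ × EuclideanSpace ℝ (Fin N)))
    (hK : K = {p | 0 ≤ p.1 ∧ ∃ q ∈ K₁, q.1 ≤ s₁ ∧
        snormS σ (p - q) ≤ ε * (Real.exp (-q.1) - Real.exp (-s₁))}) :
    IsClosed K ∧
    {x | (s₁, x) ∈ K} = {x | (s₁, x) ∈ K₁} ∧
    eS σ K L = ε * Real.exp (-s₁) ∧
    ∃ y₁, (s₁, y₁) ∈ K ∧ ∃ q ∈ L, snormS σ ((s₁, y₁) - q) = ε * Real.exp (-s₁) :=
  stmt11_general N ε σ hε hσ hεσ K₁ hK₁sub hK₁tube L hLne hLcl s₁ hs₁ ha hb K hK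
end

section
/- Let N ≥ 1, let ε, σ > 0 and s₁ ≥ 0. Let 𝒦₁ ⊆ [0,∞) × ℝ^N and define 𝒦^{ε,σ} := {(s, y) : there exists (τ, z) ∈ 𝒦₁ with τ ≤ s₁ and ‖(s, y) − (τ, z)‖_σ ≤ ε(e^{−τ} − e^{−s₁})}. Let Σ ⊆ ℝ × ℝ^N with Σ ≠ ∅ and Σ ≠ ℝ × ℝ^N, assume 𝒦^{ε,σ} ⊆ Σ, and let 𝐝^σ_Σ(p) := d^σ_Σ(p) − d^σ_{closure((ℝ×ℝ^N)∖Σ)}(p) denote the signed σ-distance to Σ. Let (τ̄, z̄) ∈ 𝒦₁ with τ̄ ≤ s₁, and let (s̄, ȳ) ∈ ℝ × ℝ^N satisfy ‖(s̄, ȳ) − (τ̄, z̄)‖_σ ≤ ε(e^{−τ̄} − e^{−s₁}). Define Σ̃ := {(τ, z) ∈ [0,∞) × ℝ^N : 𝐝^σ_Σ((τ, z) + (s̄, ȳ) − (τ̄, z̄)) ≤ −ε(e^{−τ} − e^{−τ̄})}. Then 𝒦₁ ∩ ([0, τ̄] × ℝ^N) ⊆ Σ̃; moreover, if 𝐝^σ_Σ(s̄,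 ȳ) = 0 then (τ̄, z̄) ∈ Σ̃ with equality in the defining inequality at (τ̄, z̄). -/
open Metric Set

lemma snormS_eq_norm {N : ℕ} (σ : ℝ) (p : ℝ × EuclideanSpace ℝ (Fin N)) :
    snormS σ p = ‖(WithLp.equiv 2 (ℝ × EuclideanSpace ℝ (Fin N))).symm (p.1 / σ, p.2)‖ := by
  rw [WithLp.prod_norm_eq_of_L2]
  simp [snormS, Real.norm_eq_abs, sq_abs, div_pow]

lemma snormS_nonneg {N : ℕ} (σ : ℝ) (p : ℝ × EuclideanSpace ℝ (Fin N)) : 0 ≤ snormS σ p :=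
  Real.sqrt_nonneg _

lemma snormS_zero {N : ℕ} (σ : ℝ) : snormS σ (0 : ℝ × EuclideanSpace ℝ (Fin N)) = 0 := by
  simp [snormS]

lemma snormS_add {N : ℕ} (σ : ℝ) (a b : ℝ × EuclideanSpace ℝ (Fin N)) :
    snormS σ (a + b) ≤ snormS σ a + snormS σ b := by
  rw [snormS_eq_norm, snormS_eq_norm, snormS_eq_norm]
  have : (WithLp.equiv 2 (ℝ × EuclideanSpace ℝ (Fin N))).symm ((a + b).1 / σ, (a + b).2)
      = (WithLp.equiv 2 (ℝ × EuclideanSpace ℝ (Fin N))).symm (a.1 / σ, a.2)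
        + (WithLp.equiv 2 (ℝ × EuclideanSpace ℝ (Fin N))).symm (b.1 / σ, b.2) := by
    simp [Prod.add_def, add_div]
    rfl
  rw [this]
  exact norm_add_le _ _

lemma snormS_continuous {N : ℕ} (σ : ℝ) :
    Continuous (fun p : ℝ × EuclideanSpace ℝ (Fin N) => snormS σ p) := by
  unfold snormS
  fun_prop

lemma key_sd {N : ℕ} (ε σ : ℝ) (hε : 0 < ε) (s₁ : ℝ)
    (K₁ : Set (ℝ × EuclideanSpace ℝ (Fin N)))
    (Sg : Set (ℝ × EuclideanSpace ℝ (Fin N))) (hSguniv : Sg ≠ Set.univ)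
    (hKSg : {p | ∃ q ∈ K₁, q.1 ≤ s₁ ∧
        snormS σ (p - q) ≤ ε * (Real.exp (-q.1) - Real.exp (-s₁))} ⊆ Sg)
    (p : ℝ × EuclideanSpace ℝ (Fin N)) (hp : p ∈ K₁) (hps : p.1 ≤ s₁)
    (q : ℝ × EuclideanSpace ℝ (Fin N)) (r : ℝ) (hr : 0 ≤ r)
    (hqp : snormS σ (q - p) + r ≤ ε * (Real.exp (-p.1) - Real.exp (-s₁))) :
    distS σ Sg q - distS σ (closure Sgᶜ) q ≤ -r := by
  have hqSg : q ∈ Sg := by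
    apply hKSg
    exact ⟨p, hp, hps, le_trans (le_add_of_nonneg_right hr) hqp⟩
  have hbdd : BddBelow {x | ∃ w ∈ Sg, x = snormS σ (w - q)} := by
    refine ⟨0, fun x hx => ?_⟩
    obtain ⟨w, _, rfl⟩ := hx
    exact snormS_nonneg σ _
  have h1 : distS σ Sg q ≤ 0 := by
    have : (0 : ℝ) ∈ {x | ∃ w ∈ Sg, x = snormS σ (w - q)} :=
      ⟨q, hqSg, by rw [sub_self, snormS_zero]⟩
    exact csInf_le hbdd this
  have h2 : r ≤ distS σ (closure Sgᶜ) q := by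
    have hne : (Sgᶜ : Set _).Nonempty := by
      rw [nonempty_compl]; exact hSguniv
    apply le_csInf
    · obtain ⟨w, hw⟩ := hne
      exact ⟨snormS σ (w - q), w, subset_closure hw, rfl⟩
    · rintro x ⟨w, hw, rfl⟩
      by_contra hlt
      push_neg at hlt
      have hU : IsOpen {w' : ℝ × EuclideanSpace ℝ (Fin N) | snormS σ (w' - q) < r} :=
        isOpen_lt ((snormS_continuous σ).comp (continuous_sub_right q)) continuous_const
      obtain ⟨w', hw'U, hw'c⟩ := mem_closure_iff.mp hw _ hU hlt
      apply hw'c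
      apply hKSg
      refine ⟨p, hp, hps, ?_⟩
      have : snormS σ (w' - p) ≤ snormS σ (w' - q) + snormS σ (q - p) := by
        have he : w' - p = (w' - q) + (q - p) := by abel
        rw [he]; exact snormS_add σ _ _
      calc snormS σ (w' - p) ≤ snormS σ (w' - q) + snormS σ (q - p) := this
        _ ≤ r + snormS σ (q - p) := by linarith [show snormS σ (w' - q) < r from hw'U]
        _ ≤ ε * (Real.exp (-p.1) - Real.exp (-s₁)) := by
            have := hqp; linarith
  show distS σ Sg q - distS σ (closure Sgᶜ) q ≤ -r
  linarith

theorem stmt12 (N : ℕ) (hN : 1 ≤ N) (ε σ : ℝ) (hε : 0 < ε) (hσ : 0 < σ)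
    (s₁ : ℝ) (K₁ : Set (ℝ × EuclideanSpace ℝ (Fin N)))
    (hK₁sub : ∀ p ∈ K₁, 0 ≤ p.1)
    (Sg : Set (ℝ × EuclideanSpace ℝ (Fin N))) (hSgne : Sg.Nonempty) (hSguniv : Sg ≠ Set.univ)
    (hKSg : {p | ∃ q ∈ K₁, q.1 ≤ s₁ ∧
        snormS σ (p - q) ≤ ε * (Real.exp (-q.1) - Real.exp (-s₁))} ⊆ Sg)
    (pb : ℝ × EuclideanSpace ℝ (Fin N)) (hpb : pb ∈ K₁) (hpbs : pb.1 ≤ s₁)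
    (pa : ℝ × EuclideanSpace ℝ (Fin N))
    (hpa : snormS σ (pa - pb) ≤ ε * (Real.exp (-pb.1) - Real.exp (-s₁)))
    (sd : (ℝ × EuclideanSpace ℝ (Fin N)) → ℝ)
    (hsd : sd = fun p => distS σ Sg p - distS σ (closure Sgᶜ) p)
    (T : Set (ℝ × EuclideanSpace ℝ (Fin N)))
    (hT : T = {p | 0 ≤ p.1 ∧
        sd (p + pa - pb) ≤ -ε * (Real.exp (-p.1) - Real.exp (-pb.1))}) :
    (∀ p ∈ K₁, p.1 ≤ pb.1 → p ∈ T) ∧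
    (sd pa = 0 →
      pb ∈ T ∧ sd (pb + pa - pb) = -ε * (Real.exp (-pb.1) - Real.exp (-pb.1))) := by
  have hcancel : pb + pa - pb = pa := by abel
  constructor
  · intro p hp hple
    subst hT hsd
    refine ⟨hK₁sub p hp, ?_⟩
    set q := p + pa - pb with hq
    set r := ε * (Real.exp (-p.1) - Real.exp (-pb.1)) with hrdef
    have hr : 0 ≤ r := by
      apply mul_nonneg hε.le
      have := Real.exp_le_exp.mpr (neg_le_neg hple)
      linarith
    have hmain : distS σ Sg q - distS σ (closure Sgᶜ) q ≤ -r := by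
      apply key_sd ε σ hε s₁ K₁ Sg hSguniv hKSg p hp (hple.trans hpbs) q r hr
      have hqp : q - p = pa - pb := by rw [hq]; abel
      rw [hqp, hrdef]
      have := Real.exp_le_exp.mpr (neg_le_neg hple)
      nlinarith
    calc distS σ Sg q - distS σ (closure Sgᶜ) q ≤ -r := hmain
      _ = -ε * (Real.exp (-p.1) - Real.exp (-pb.1)) := by ring
  · intro hsd0
    have h2 : sd (pb + pa - pb) = -ε * (Real.exp (-pb.1) - Real.exp (-pb.1)) := by
      rw [hcancel, hsd0]; ring
    refine ⟨?_, h2⟩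
    rw [hT]
    exact ⟨hK₁sub pb hpb, by rw [h2]⟩
end
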